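/- Let a, b, c, d, k ∈ ℝ and set A = 2c − 6kd, B = 2(b − kc), C = 6a − 2kb, and assume A ≠ 0. Define p(u) = (−1 − Bu + √((B² − AC)u² + 2(B + Ak)u + 1))/A. Then there exists ε > 0 such that on (−ε, ε) the expression under the square root is strictly positive, p is smooth, p(0) = 0, and p satisfies the differential equation p'(u)(A p(u) + B u + 1) + B p(u) + C u − k = 0 for all u ∈ (−ε, ε). -/

import Mathlib

/-- The function `p` of the paper: `p(u) = (−1 − Bu + √((B² − AC)u² + 2(B + Ak)u + 1))/A`. -/
noncomputable def pFun (A B C k : ℝ) : ℝ → ℝ :=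
  fun u =>
    (-1 - B * u + Real.sqrt ((B ^ 2 - A * C) * u ^ 2 + 2 * (B + A * k) * u + 1)) / A

/-- With `A = 2c − 6kd`, `B = 2(b − kc)`, `C = 6a − 2kb` and `A ≠ 0`, there is `ε > 0`
such that on `(−ε, ε)` the radicand is positive, `p = pFun A B C k` is smooth, `p(0) = 0`,
and `p` satisfies `p'(u)(Ap(u) + Bu + 1) + Bp(u) + Cu − k = 0`. -/
theorem pFun_solves_ode (a b c d k A B C : ℝ)
    (hA : A = 2 * c - 6 * k * d) (hB : B = 2 * (b - k * c)) (hC : C = 6 * a - 2 * k * b)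
    (hA0 : A ≠ 0) :
    ∃ ε > (0 : ℝ),
      (∀ u ∈ Set.Ioo (-ε) ε,
        0 < (B ^ 2 - A * C) * u ^ 2 + 2 * (B + A * k) * u + 1) ∧
      ContDiffOn ℝ (⊤ : ℕ∞) (pFun A B C k) (Set.Ioo (-ε) ε) ∧
      pFun A B C k 0 = 0 ∧
      ∀ u ∈ Set.Ioo (-ε) ε,
        deriv (pFun A B C k) u * (A * pFun A B C k u + B * u + 1) +
          B * pFun A B C k u + C * u - k = 0 := by
  set M : ℝ := |B ^ 2 - A * C| + 2 * |B + A * k| + 1 with hM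
  have hM1 : (1 : ℝ) ≤ M := by
    have h1 := abs_nonneg (B ^ 2 - A * C)
    have h2 := abs_nonneg (B + A * k)
    simp only [hM]; linarith
  have hMpos : (0 : ℝ) < M := lt_of_lt_of_le one_pos hM1
  set ε : ℝ := 1 / (2 * M) with hε
  have hεpos : 0 < ε := by positivity
  have hpos : ∀ u ∈ Set.Ioo (-ε) ε,
      0 < (B ^ 2 - A * C) * u ^ 2 + 2 * (B + A * k) * u + 1 := by
    intro u hu
    have habs : |u| < ε := abs_lt.mpr ⟨hu.1, hu.2⟩
    have hule1 : |u| ≤ 1 := by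
      have : ε ≤ 1 := by
        rw [hε, div_le_one (by positivity)]; linarith
      linarith
    have hMu : M * |u| < 1 / 2 := by
      have := (mul_lt_mul_of_pos_left habs hMpos)
      calc M * |u| < M * ε := this
        _ = 1 / 2 := by rw [hε]; field_simp
    have e1 : -( |B ^ 2 - A * C| * |u|) ≤ (B ^ 2 - A * C) * u ^ 2 := by
      have h1 : |(B ^ 2 - A * C) * u ^ 2| ≤ |B ^ 2 - A * C| * |u| := by
        rw [abs_mul, abs_pow]
        have : |u| ^ 2 ≤ |u| := by nlinarith [abs_nonneg u]
        nlinarith [abs_nonneg (B ^ 2 - A * C)]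
      linarith [neg_abs_le ((B ^ 2 - A * C) * u ^ 2)]
    have e2 : -(2 * |B + A * k| * |u|) ≤ 2 * (B + A * k) * u := by
      have h1 : |2 * (B + A * k) * u| ≤ 2 * |B + A * k| * |u| := by
        rw [abs_mul, abs_mul]; simp [abs_of_nonneg]
      linarith [neg_abs_le (2 * (B + A * k) * u)]
    have hexp : |B ^ 2 - A * C| * |u| + 2 * |B + A * k| * |u| + |u| < 1 / 2 := by
      have : M * |u| = |B ^ 2 - A * C| * |u| + 2 * |B + A * k| * |u| + |u| := by
        rw [hM]; ring
      linarith
    have := abs_nonneg u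
    linarith
  refine ⟨ε, hεpos, hpos, ?_, ?_, ?_⟩
  · -- smoothness
    have hsq : ContDiffOn ℝ (⊤ : ℕ∞)
        (fun u => Real.sqrt ((B ^ 2 - A * C) * u ^ 2 + 2 * (B + A * k) * u + 1))
        (Set.Ioo (-ε) ε) := by
      intro u hu
      have hq : ContDiffAt ℝ (⊤ : ℕ∞)
          (fun u : ℝ => (B ^ 2 - A * C) * u ^ 2 + 2 * (B + A * k) * u + 1) u := by
        fun_prop
      exact ((Real.contDiffAt_sqrt (hpos u hu).ne').comp u hq).contDiffWithinAt
    have : ContDiffOn ℝ (⊤ : ℕ∞)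
        (fun u : ℝ => -1 - B * u) (Set.Ioo (-ε) ε) := by fun_prop
    exact (this.add hsq).div_const A
  · -- value at 0
    simp [pFun, Real.sqrt_one]
  · -- ODE
    intro u hu
    set q : ℝ := (B ^ 2 - A * C) * u ^ 2 + 2 * (B + A * k) * u + 1 with hqdef
    have hq0 : 0 < q := hpos u hu
    set s : ℝ := Real.sqrt q with hs
    have hs0 : 0 < s := Real.sqrt_pos.mpr hq0
    have h1 : HasDerivAt
        (fun u : ℝ => (B ^ 2 - A * C) * u ^ 2 + 2 * (B + A * k) * u + 1)
        (2 * (B ^ 2 - A * C) * u + 2 * (B + A * k)) u := by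
      have h := (((hasDerivAt_pow 2 u).const_mul (B ^ 2 - A * C)).add
        (((hasDerivAt_id u).const_mul (2 * (B + A * k))).add_const 1))
      convert h using 1
      · rfl
      · rfl
      · ext x; simp only [Pi.add_apply, id]; ring
      · push_cast; ring
    have hsder : HasDerivAt
        (fun u : ℝ => Real.sqrt ((B ^ 2 - A * C) * u ^ 2 + 2 * (B + A * k) * u + 1))
        (1 / (2 * s) * (2 * (B ^ 2 - A * C) * u + 2 * (B + A * k))) u := by
      exact (Real.hasDerivAt_sqrt hq0.ne').comp u h1
    have hpder : HasDerivAt (pFun A B C k)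
        ((0 - B * 1 + 1 / (2 * s) * (2 * (B ^ 2 - A * C) * u + 2 * (B + A * k))) / A) u := by
      have := (((hasDerivAt_const u (-1 : ℝ)).sub ((hasDerivAt_id u).const_mul B)).add
        hsder).div_const A
      convert this using 2 <;>
        first
          | (ext x; simp [pFun]; ring)
          | rfl
          | simp
    have hderiv : deriv (pFun A B C k) u =
        (0 - B * 1 + 1 / (2 * s) * (2 * (B ^ 2 - A * C) * u + 2 * (B + A * k))) / A :=
      hpder.deriv
    have hpval : pFun A B C k u = (-1 - B * u + s) / A := by
      simp [pFun, hs, hqdef]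
    rw [hderiv, hpval]
    field_simp
    ring
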